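/- Let L be a random index on ℕ with P(L = ℓ) = ω_ℓ > 0 for all ℓ, and let (Δ_ℓ) be integrable random variables independent of L such that Σ_ℓ E[|Δ_ℓ|] < ∞. Then the estimator Z = Δ_L / ω_L satisfies E[Z] = Σ_{ℓ=0}^∞ E[Δ_ℓ]. -/

import Mathlib

open MeasureTheory ProbabilityTheory

/-
Write `Z = Δ_L / ω_L` as the series `∑ₗ 1{L = ℓ} Δₗ / ωₗ`, which has a single nonzero term at
each point. Since `L` is independent of `Δ`, each term has expectation `ωₗ E[Δₗ] / ωₗ = E[Δₗ]`,
and likewise the expected absolute value of each term is `E[|Δₗ|]`. Summability of these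
absolute moments makes `Z` integrable and lets the expectation pass through the series.
-/

namespace MeasureTheory

variable {α E : Type*} {m : MeasurableSpace α} {μ : Measure α} [NormedAddCommGroup E]

theorem Integrable.of_hasSum_of_summable_integral_norm {ι : Type*} [Countable ι]
    {F : ι → α → E} {f : α → E} (hF_int : ∀ i, Integrable (F i) μ)
    (hF_sum : Summable fun i ↦ ∫ a, ‖F i a‖ ∂μ) (hf : ∀ᵐ a ∂μ, HasSum (F · a) (f a)) :
    Integrable f μ := by
  have hf_meas : AEStronglyMeasurable f μ :=
    aestronglyMeasurable_of_tendsto_ae Filter.atTop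
      (fun s : Finset ι ↦ s.aestronglyMeasurable_fun_sum fun i _ ↦ (hF_int i).1) hf
  refine ⟨hf_meas, ?_⟩
  have hF_enorm : ∀ i, ∫⁻ a, ‖F i a‖ₑ ∂μ = ENNReal.ofReal (∫ a, ‖F i a‖ ∂μ) := fun i ↦
    (ofReal_integral_norm_eq_lintegral_enorm (hF_int i)).symm
  calc ∫⁻ a, ‖f a‖ₑ ∂μ
      ≤ ∫⁻ a, ∑' i, ‖F i a‖ₑ ∂μ :=
        lintegral_mono_ae <| hf.mono fun a ha ↦ ha.tsum_eq ▸ enorm_tsum_le_tsum_enorm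
    _ = ENNReal.ofReal (∑' i, ∫ a, ‖F i a‖ ∂μ) := by
        rw [lintegral_tsum fun i ↦ (hF_int i).1.enorm, ENNReal.ofReal_tsum_of_nonneg
          (fun i ↦ integral_nonneg fun a ↦ norm_nonneg _) hF_sum]
        exact tsum_congr hF_enorm
    _ < ⊤ := ENNReal.ofReal_lt_top

end MeasureTheory

namespace ProbabilityTheory

variable {Ω β γ : Type*} {mΩ : MeasurableSpace Ω} {μ : Measure Ω}
  [MeasurableSpace β] [MeasurableSpace γ]

theorem IndepFun.setIntegral_preimage_eq_mul {X : Ω → β} {Y : Ω → γ} (hXY : IndepFun X Y μ)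
    (hX : Measurable X) (hY : AEMeasurable Y μ) {s : Set β} (hs : MeasurableSet s) {f : γ → ℝ}
    (hf : AEStronglyMeasurable f (μ.map Y)) :
    ∫ ω in X ⁻¹' s, f (Y ω) ∂μ = μ.real (X ⁻¹' s) * ∫ ω, f (Y ω) ∂μ :=
  Indep.setIntegral_eq_mul hX.comap_le ((IndepFun_iff_Indep X Y μ).1 hXY) hY ⟨s, hs, rfl⟩ hf

theorem IndepFun.integral_indicator_preimage_div {X : Ω → β} {Y : Ω → γ}
    (hXY : IndepFun X Y μ) (hX : Measurable X) (hY : AEMeasurable Y μ) {s : Set β}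
    (hs : MeasurableSet s) {p : ℝ} (hp : p ≠ 0) (hXs : μ.real (X ⁻¹' s) = p) {f : γ → ℝ}
    (hf : AEStronglyMeasurable f (μ.map Y)) :
    ∫ ω, (X ⁻¹' s).indicator (fun ω => f (Y ω) / p) ω ∂μ = ∫ ω, f (Y ω) ∂μ := by
  have h_split : ∫ ω in X ⁻¹' s, f (Y ω) / p ∂μ = μ.real (X ⁻¹' s) * ∫ ω, f (Y ω) / p ∂μ :=
    hXY.setIntegral_preimage_eq_mul (f := (f · / p)) hX hY hs (hf.mul_const p⁻¹)
  rw [integral_indicator (hX hs), h_split, hXs, integral_div, mul_div_cancel₀ _ hp]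

end ProbabilityTheory

theorem stmt10_general {Ω : Type*} [MeasurableSpace Ω] (μ : Measure Ω)
    (L : Ω → ℕ) (hL : Measurable L)
    (ω : ℕ → ℝ) (hω : ∀ ℓ, 0 < ω ℓ)
    (hLdist : ∀ ℓ, μ {x | L x = ℓ} = ENNReal.ofReal (ω ℓ))
    (Δ : ℕ → Ω → ℝ)
    (hΔint : ∀ ℓ, Integrable (Δ ℓ) μ)
    (hindep : IndepFun L (fun x => fun ℓ => Δ ℓ x) μ)
    (hsum : Summable (fun ℓ => ∫ x, |Δ ℓ x| ∂μ)) :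
    Integrable (fun x => Δ (L x) x / ω (L x)) μ ∧
    ∫ x, Δ (L x) x / ω (L x) ∂μ = ∑' ℓ, ∫ x, Δ ℓ x ∂μ := by
  have hμL ℓ : μ.real (L ⁻¹' {ℓ}) = ω ℓ :=
    (congrArg ENNReal.toReal (hLdist ℓ)).trans (ENNReal.toReal_ofReal (hω ℓ).le)
  have hΔ_vec : AEMeasurable (fun x ℓ => Δ ℓ x) μ :=
    aemeasurable_pi_lambda _ fun ℓ ↦ (hΔint ℓ).aemeasurable
  have h_term ℓ {φ : ℝ → ℝ} (hφ : Measurable φ) :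
      ∫ x, (L ⁻¹' {ℓ}).indicator (fun x => φ (Δ ℓ x) / ω ℓ) x ∂μ = ∫ x, φ (Δ ℓ x) ∂μ :=
    hindep.integral_indicator_preimage_div (f := fun v => φ (v ℓ)) hL hΔ_vec
      (measurableSet_singleton ℓ) (hω ℓ).ne' (hμL ℓ)
      (hφ.comp (measurable_pi_apply ℓ)).aestronglyMeasurable
  set g : ℕ → Ω → ℝ := fun ℓ => (L ⁻¹' {ℓ}).indicator (fun x => Δ ℓ x / ω ℓ)
  have hg_int ℓ : Integrable (g ℓ) μ :=
    ((hΔint ℓ).div_const _).indicator (hL (measurableSet_singleton ℓ))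
  have hg_norm ℓ : ∫ x, ‖g ℓ x‖ ∂μ = ∫ x, |Δ ℓ x| ∂μ := by
    simp only [g, norm_indicator_eq_indicator_norm, Real.norm_eq_abs, abs_div, abs_of_pos (hω ℓ)]
    exact h_term ℓ measurable_abs
  have hg_sum x : HasSum (g · x) (Δ (L x) x / ω (L x)) := by
    convert hasSum_ite_eq (L x) (Δ (L x) x / ω (L x)) using 2 with ℓ
    by_cases h : ℓ = L x <;> simp [g, h, eq_comm]
  have hg_summable : Summable fun ℓ => ∫ x, ‖g ℓ x‖ ∂μ := by simpa only [hg_norm] using hsum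
  refine ⟨.of_hasSum_of_summable_integral_norm hg_int hg_summable (.of_forall hg_sum), ?_⟩
  calc ∫ x, Δ (L x) x / ω (L x) ∂μ = ∫ x, ∑' ℓ, g ℓ x ∂μ := by simp only [(hg_sum _).tsum_eq]
    _ = ∑' ℓ, ∫ x, g ℓ x ∂μ := (integral_tsum_of_summable_integral_norm hg_int hg_summable).symm
    _ = ∑' ℓ, ∫ x, Δ ℓ x ∂μ := tsum_congr fun ℓ => h_term ℓ measurable_id

theorem stmt10 {Ω : Type*} [MeasurableSpace Ω] (μ : Measure Ω) [IsProbabilityMeasure μ]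
    (L : Ω → ℕ) (hL : Measurable L)
    (ω : ℕ → ℝ) (hω : ∀ ℓ, 0 < ω ℓ)
    (hLdist : ∀ ℓ, μ {x | L x = ℓ} = ENNReal.ofReal (ω ℓ))
    (Δ : ℕ → Ω → ℝ) (hΔmeas : ∀ ℓ, Measurable (Δ ℓ))
    (hΔint : ∀ ℓ, Integrable (Δ ℓ) μ)
    (hindep : IndepFun L (fun x => fun ℓ => Δ ℓ x) μ)
    (hsum : Summable (fun ℓ => ∫ x, |Δ ℓ x| ∂μ)) :
    Integrable (fun x => Δ (L x) x / ω (L x)) μ ∧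
    ∫ x, Δ (L x) x / ω (L x) ∂μ = ∑' ℓ, ∫ x, Δ ℓ x ∂μ :=
  stmt10_general μ L hL ω hω hLdist Δ hΔint hindep hsum
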